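/- Let f: ℝ^p → ℝ be convex and L_f-smooth, let g: ℝ^p → ℝ ∪ {∞} be proper, convex and lsc, and let 0 < γ < 1/L_f. Then the DC envelope φ_γ = g^γ − (−f)^γ is a convex function on ℝ^p. -/

import Mathlib

/-!
The Moreau envelope of the convex function `g` is convex, being the infimum over `w` of the
jointly convex function `(s, w) ↦ g w + ‖w - s‖² / (2γ)`. The envelope of the concave function
`-f` is concave, being the infimum over `d` of the concave functions
`s ↦ -f (s + d) + ‖d‖² / (2γ)`; it is finite because the descent lemma
`f w ≤ f s + ⟪∇f s, w - s⟫ + L_f ‖w - s‖² / 2` and `γ L_f < 1` make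
`w ↦ -f w + ‖w - s‖² / (2γ)` bounded below. The difference is therefore convex.

Since `moreauR` reads `-∞` as `0`, one must also rule out an envelope of `g` that is `-∞` at some
points only: by convexity and finiteness from above, `-∞` at one point forces `-∞` everywhere.
-/

open scoped InnerProductSpace
noncomputable section

/-- `ℝ^p` as a Euclidean space. -/
abbrev Euc (p : ℕ) := EuclideanSpace ℝ (Fin p)

variable {p : ℕ}

/-- `f : ℝ^p → ℝ ∪ {∞}` (modelled with `EReal` values never equal to `-∞`) is proper. -/
def ProperFun (f : Euc p → EReal) : Prop :=
  (∀ x, f x ≠ ⊥) ∧ (∃ x, f x ≠ ⊤)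

/-- Convexity for extended-real-valued functions. -/
def ConvexFun (f : Euc p → EReal) : Prop :=
  ∀ x y : Euc p, ∀ t : ℝ, 0 ≤ t → t ≤ 1 →
    f (t • x + (1 - t) • y) ≤ (t : EReal) * f x + ((1 - t : ℝ) : EReal) * f y

/-- The Moreau envelope `f^γ(x) = inf_w { f(w) + (1/(2γ))‖w − x‖² }`, as an extended real. -/
def moreau (f : Euc p → EReal) (γ : ℝ) (x : Euc p) : EReal :=
  ⨅ w : Euc p, f w + ((1/(2*γ) * ‖w - x‖^2 : ℝ) : EReal)

/-- The (real-valued) Moreau envelope. -/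
def moreauR (f : Euc p → EReal) (γ : ℝ) (x : Euc p) : ℝ := (moreau f γ x).toReal

open scoped NNReal
open Set

section Smooth

variable {E : Type*} [NormedAddCommGroup E] [InnerProductSpace ℝ E] [CompleteSpace E]

theorem HasGradientAt.hasDerivAt_comp_add_smul {f : E → ℝ} {f' x d : E} {t : ℝ}
    (hf : HasGradientAt f f' (x + t • d)) :
    HasDerivAt (fun t : ℝ => f (x + t • d)) ⟪f', d⟫_ℝ t := by
  have hline : HasDerivAt (fun t : ℝ => x + t • d) d t := by
    simpa using ((hasDerivAt_id t).smul_const d).const_add x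
  simpa [Function.comp_def, real_inner_comm] using hf.hasFDerivAt.comp_hasDerivAt t hline

theorem le_add_inner_add_of_lipschitzWith_gradient {f : E → ℝ} {f' : E → E} {K : ℝ≥0}
    (hf : ∀ x, HasGradientAt f (f' x) x) (hf' : LipschitzWith K f') (x y : E) :
    f y ≤ f x + ⟪f' x, y - x⟫_ℝ + K / 2 * ‖y - x‖ ^ 2 := by
  set d := y - x
  let φ : ℝ → ℝ := fun t => f (x + t • d) - t * ⟪f' x, d⟫_ℝ - K / 2 * t ^ 2 * ‖d‖ ^ 2
  have hφ : ∀ t, HasDerivAt φ (⟪f' (x + t • d) - f' x, d⟫_ℝ - K * t * ‖d‖ ^ 2) t := by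
    intro t
    refine ((((hf (x + t • d)).hasDerivAt_comp_add_smul).sub ((hasDerivAt_id t).mul_const _)).sub
      (((hasDerivAt_pow 2 t).const_mul (K / 2 : ℝ)).mul_const (‖d‖ ^ 2))).congr_deriv ?_
    rw [inner_sub_left]; ring
  have hφ_nonpos : ∀ t ∈ interior (Ici (0 : ℝ)),
      ⟪f' (x + t • d) - f' x, d⟫_ℝ - K * t * ‖d‖ ^ 2 ≤ 0 := by
    intro t ht
    rw [interior_Ici, mem_Ioi] at ht
    have hlip : ‖f' (x + t • d) - f' x‖ ≤ K * (t * ‖d‖) := by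
      simpa [norm_smul, abs_of_pos ht] using hf'.norm_sub_le (x + t • d) x
    nlinarith [real_inner_le_norm (f' (x + t • d) - f' x) d, norm_nonneg d]
  have hanti : AntitoneOn φ (Ici 0) :=
    antitoneOn_of_hasDerivWithinAt_nonpos (convex_Ici 0)
      (HasDerivAt.continuousOn fun t _ => hφ t) (fun t _ => (hφ t).hasDerivWithinAt) hφ_nonpos
  have hφ01 := hanti self_mem_Ici (zero_le_one' ℝ) zero_le_one
  simp only [φ, zero_smul, add_zero, one_smul, add_sub_cancel, d] at hφ01
  linarith

end Smooth

theorem EReal.exists_coe_of_add_coe_lt {e : EReal} {c M : ℝ} (he : e ≠ ⊥) (h : e + c < M) :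
    ∃ a : ℝ, e = a ∧ a + c < M := by
  induction e using EReal.rec with
  | bot => exact absurd rfl he
  | coe a => exact ⟨a, rfl, mod_cast h⟩
  | top => simp at h

section Moreau

variable {g : Euc p → EReal} {γ : ℝ}

theorem moreau_le (g : Euc p → EReal) (γ : ℝ) (x w : Euc p) :
    moreau g γ x ≤ g w + ((1 / (2 * γ) * ‖w - x‖ ^ 2 : ℝ) : EReal) :=
  iInf_le _ w

theorem moreau_smul_add_smul_le (hg_ne_bot : ∀ x, g x ≠ ⊥) (hg : ConvexFun g) (hγ : 0 ≤ γ)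
    {x y : Euc p} {a b u v : ℝ} (ha : 0 ≤ a) (hb : 0 ≤ b) (hab : a + b = 1)
    (hx : moreau g γ x < u) (hy : moreau g γ y < v) :
    moreau g γ (a • x + b • y) ≤ (a * u + b * v : ℝ) := by
  obtain rfl : b = 1 - a := by linarith
  rw [moreau, iInf_lt_iff] at hx hy
  obtain ⟨w₁, hw₁⟩ := hx
  obtain ⟨w₂, hw₂⟩ := hy
  obtain ⟨c₁, hc₁, hu⟩ := EReal.exists_coe_of_add_coe_lt (hg_ne_bot w₁) hw₁
  obtain ⟨c₂, hc₂, hv⟩ := EReal.exists_coe_of_add_coe_lt (hg_ne_bot w₂) hw₂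
  set w := a • w₁ + (1 - a) • w₂
  have hgw : g w ≤ (a * c₁ + (1 - a) * c₂ : ℝ) := by
    simpa [hc₁, hc₂] using hg w₁ w₂ a ha (by linarith)
  have hsq : ‖w - (a • x + (1 - a) • y)‖ ^ 2 ≤ a * ‖w₁ - x‖ ^ 2 + (1 - a) * ‖w₂ - y‖ ^ 2 := by
    have hconv := (convexOn_norm convex_univ (E := Euc p)).pow (fun _ _ => norm_nonneg _) 2
    have hws : w - (a • x + (1 - a) • y) = a • (w₁ - x) + (1 - a) • (w₂ - y) := by
      simp only [w]; module
    rw [hws]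
    simpa using hconv.2 (mem_univ (w₁ - x)) (mem_univ (w₂ - y)) ha hb (by ring)
  have hβ : 0 ≤ 1 / (2 * γ) := by positivity
  calc moreau g γ (a • x + (1 - a) • y)
      ≤ g w + ((1 / (2 * γ) * ‖w - (a • x + (1 - a) • y)‖ ^ 2 : ℝ) : EReal) := moreau_le _ _ _ _
    _ ≤ ((a * c₁ + (1 - a) * c₂ + 1 / (2 * γ) * ‖w - (a • x + (1 - a) • y)‖ ^ 2 : ℝ) :
          EReal) := by
        rw [EReal.coe_add]; exact add_le_add_left hgw _
    _ ≤ (a * u + (1 - a) * v : ℝ) := by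
        refine EReal.coe_le_coe_iff.2 ?_
        nlinarith [mul_le_mul_of_nonneg_left hsq hβ, mul_le_mul_of_nonneg_left hu.le ha,
          mul_le_mul_of_nonneg_left hv.le hb]

theorem moreau_lt_top (hg : ProperFun g) (γ : ℝ) (s : Euc p) : moreau g γ s < ⊤ := by
  obtain ⟨x₀, hx₀⟩ := hg.2
  exact (moreau_le g γ s x₀).trans_lt (EReal.add_lt_top hx₀ (EReal.coe_ne_top _))

theorem moreau_eq_bot_of_eq_bot (hg : ProperFun g) (hgc : ConvexFun g) (hγ : 0 ≤ γ)
    {s₀ : Euc p} (hs₀ : moreau g γ s₀ = ⊥) (s : Euc p) : moreau g γ s = ⊥ := by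
  set s' := (2 : ℝ) • s - s₀
  obtain ⟨v, hv, -⟩ := EReal.lt_iff_exists_real_btwn.1 (moreau_lt_top hg γ s')
  have hs : s = (1 / 2 : ℝ) • s₀ + (1 / 2 : ℝ) • s' := by simp only [s']; module
  refine (EReal.eq_bot_iff_forall_lt _).2 fun N => ?_
  have hx : moreau g γ s₀ < (2 * (N - 1) - v : ℝ) := hs₀ ▸ EReal.bot_lt_coe _
  calc moreau g γ s ≤ (1 / 2 * (2 * (N - 1) - v) + 1 / 2 * v : ℝ) := by
        rw [hs]
        exact moreau_smul_add_smul_le hg.1 hgc hγ (by norm_num) (by norm_num) (by norm_num) hx hv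
    _ < N := EReal.coe_lt_coe_iff.2 (by linarith)

theorem convexOn_moreauR (hg : ProperFun g) (hgc : ConvexFun g) (hγ : 0 ≤ γ) :
    ConvexOn ℝ univ (moreauR g γ) := by
  by_cases hbot : ∃ s₀, moreau g γ s₀ = ⊥
  · obtain ⟨s₀, hs₀⟩ := hbot
    have hzero : moreauR g γ = fun _ => 0 :=
      funext fun s => by simp [moreauR, moreau_eq_bot_of_eq_bot hg hgc hγ hs₀ s]
    exact hzero ▸ convexOn_const 0 convex_univ
  simp only [not_exists] at hbot
  have hcoe : ∀ s, moreau g γ s = moreauR g γ s := fun s =>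
    (EReal.coe_toReal (moreau_lt_top hg γ s).ne (hbot s)).symm
  have hlt : ∀ s {ε : ℝ}, 0 < ε → moreau g γ s < (moreauR g γ s + ε : ℝ) := fun s ε hε => by
    rw [hcoe]; exact EReal.coe_lt_coe_iff.2 (by linarith)
  refine ⟨convex_univ, fun x _ y _ a b ha hb hab => le_of_forall_pos_le_add fun ε hε => ?_⟩
  have hle := moreau_smul_add_smul_le hg.1 hgc hγ ha hb hab (hlt x hε) (hlt y hε)
  rw [hcoe, EReal.coe_le_coe_iff] at hle
  linear_combination hle + ε * hab

end Moreau

section RealValued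

variable {h : Euc p → ℝ} {γ : ℝ} {s : Euc p}

theorem coe_moreauR_of_ne_bot (hbot : moreau (fun x => (h x : EReal)) γ s ≠ ⊥) :
    (moreauR (fun x => (h x : EReal)) γ s : EReal) = moreau (fun x => (h x : EReal)) γ s := by
  refine EReal.coe_toReal (ne_top_of_le_ne_top (EReal.coe_ne_top (h s)) ?_) hbot
  simpa using moreau_le (fun x => (h x : EReal)) γ s s

theorem moreauR_le_of_ne_bot (hbot : moreau (fun x => (h x : EReal)) γ s ≠ ⊥) (w : Euc p) :
    moreauR (fun x => (h x : EReal)) γ s ≤ h w + 1 / (2 * γ) * ‖w - s‖ ^ 2 := by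
  have hle := moreau_le (fun x => (h x : EReal)) γ s w
  rw [← coe_moreauR_of_ne_bot hbot] at hle
  exact_mod_cast hle

theorem coe_le_moreau_of_forall_le {B : ℝ} (hB : ∀ w, B ≤ h w + 1 / (2 * γ) * ‖w - s‖ ^ 2) :
    (B : EReal) ≤ moreau (fun x => (h x : EReal)) γ s :=
  le_iInf fun w => (EReal.coe_le_coe_iff.2 (hB w)).trans_eq (EReal.coe_add _ _)

theorem le_moreauR_of_forall_le {B : ℝ} (hB : ∀ w, B ≤ h w + 1 / (2 * γ) * ‖w - s‖ ^ 2) :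
    B ≤ moreauR (fun x => (h x : EReal)) γ s := by
  have hle := coe_le_moreau_of_forall_le hB
  rw [← coe_moreauR_of_ne_bot (ne_bot_of_le_ne_bot (EReal.coe_ne_bot B) hle)] at hle
  exact_mod_cast hle

-- For each `d`, `s ↦ h (s + d) + ‖d‖² / (2γ)` is concave, and the envelope is their infimum.
theorem concaveOn_moreauR (hh : ConcaveOn ℝ univ h)
    (hbot : ∀ s, moreau (fun x => (h x : EReal)) γ s ≠ ⊥) :
    ConcaveOn ℝ univ (moreauR (fun x => (h x : EReal)) γ) := by
  refine ⟨convex_univ, fun x _ y _ a b ha hb hab => le_moreauR_of_forall_le fun w => ?_⟩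
  obtain rfl : b = 1 - a := by linarith
  set d := w - (a • x + (1 - a) • y)
  have hw : a • (x + d) + (1 - a) • (y + d) = w := by simp only [d]; module
  have hconc := hh.2 (mem_univ (x + d)) (mem_univ (y + d)) ha hb hab
  rw [hw, smul_eq_mul, smul_eq_mul] at hconc
  have hx := moreauR_le_of_ne_bot (hbot x) (x + d)
  have hy := moreauR_le_of_ne_bot (hbot y) (y + d)
  rw [add_sub_cancel_left] at hx hy
  simp only [smul_eq_mul]
  nlinarith [mul_le_mul_of_nonneg_left hx ha, mul_le_mul_of_nonneg_left hy hb]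

theorem moreau_neg_ne_bot {f : Euc p → ℝ} {f' : Euc p → Euc p} {K : ℝ≥0}
    (hf : ∀ x, HasGradientAt f (f' x) x) (hf' : LipschitzWith K f') (hγ : 0 < γ)
    (hγK : γ * K < 1) (s : Euc p) : moreau (fun x => ((-f x : ℝ) : EReal)) γ s ≠ ⊥ := by
  set a := 1 / (2 * γ) - K / 2
  have ha : 0 < a := sub_pos.2 (by rw [lt_div_iff₀ (by positivity)]; linarith)
  suffices hB : ∀ w, -f s - ‖f' s‖ ^ 2 / (4 * a) ≤ -f w + 1 / (2 * γ) * ‖w - s‖ ^ 2 from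
    ne_bot_of_le_ne_bot (EReal.coe_ne_bot _) (coe_le_moreau_of_forall_le hB)
  intro w
  have hdescent := le_add_inner_add_of_lipschitzWith_gradient hf hf' s w
  have hinner := real_inner_le_norm (f' s) (w - s)
  have hyoung : ‖f' s‖ * ‖w - s‖ ≤ ‖f' s‖ ^ 2 / (4 * a) + a * ‖w - s‖ ^ 2 := by
    rw [div_add' _ _ _ (by positivity), le_div_iff₀ (by positivity)]
    nlinarith [sq_nonneg (‖f' s‖ - 2 * a * ‖w - s‖)]
  simp only [a] at hyoung
  linarith

end RealValued

theorem statement11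
    (f : Euc p → ℝ) (f' : Euc p → Euc p)
    (hf : ∀ x, HasGradientAt f (f' x) x)
    (hfconvex : ConvexOn ℝ Set.univ f)
    (Lf : ℝ) (hlip : LipschitzWith (Real.toNNReal Lf) f')
    (g : Euc p → EReal)
    (hg_proper : ProperFun g) (hg_convex : ConvexFun g)
    (γ : ℝ) (hγ : 0 < γ) (hγL : γ * Lf < 1) :
    ConvexOn ℝ Set.univ
      (fun s => moreauR g γ s - moreauR (fun x => ((-f x : ℝ) : EReal)) γ s) := by
  have hγK : γ * (Real.toNNReal Lf : ℝ) < 1 := by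
    rw [Real.coe_toNNReal', mul_max_of_nonneg _ _ hγ.le]
    exact max_lt hγL (by simp)
  exact (convexOn_moreauR hg_proper hg_convex hγ.le).sub
    (concaveOn_moreauR hfconvex.neg (moreau_neg_ne_bot hf hlip hγ hγK))
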